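/- arXiv:1710.08068 — 6 statements merged into one kernel-verified Lean document; each statement's English description precedes it below -/
import Mathlib

section
/- Let A be a locally noetherian Grothendieck category. Then every spectral object P of A is finitely generated (equivalently, noetherian). -/
/-!
Common set-up: Rosenberg's spectrum of an abelian category.

For objects `X Y` of an abelian category `C`, `X ≺ Y` means that `X` is a subquotient of a
finite direct sum of copies of `Y`; `X ≈ Y` means `X ≺ Y ≺ X`.  A nonzero object `P` is
*spectral* if it is `≈`-equivalent to each of its nonzero subobjects, and the spectrum
`𝔖pec(C)` is the collection of `≈`-equivalence classes `⟨P⟩` of spectral objects.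
`Supp(M) = {⟨P⟩ : P ≺ M}` and `Ass(M) = {⟨P⟩ : some spectral object of class ⟨P⟩ embeds in M}`.
-/

open CategoryTheory CategoryTheory.Limits

attribute [local instance] CategoryTheory.Abelian.hasFiniteBiproducts
attribute [local instance] CategoryTheory.Limits.hasBinaryBiproducts_of_finite_biproducts

universe v u

namespace RosenbergSpec

variable (C : Type u) [Category.{v} C] [Abelian C]

/-- `X ≺ Y` : `X` is a subquotient of a finite direct sum of copies of `Y`. -/
def Prec (X Y : C) : Prop :=
  ∃ n : ℕ, 0 < n ∧ ∃ (S : C) (ι : S ⟶ ⨁ (fun _ : Fin n => Y)) (π : S ⟶ X),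
    Mono ι ∧ Epi π

/-- `X ≈ Y` : mutual subquotient equivalence. -/
def PrecEquiv (X Y : C) : Prop := Prec C X Y ∧ Prec C Y X

/-- A nonzero object is spectral if it is `≈`-equivalent to each of its nonzero subobjects. -/
def IsSpectral (P : C) : Prop :=
  ¬ IsZero P ∧ ∀ (Q : C) (f : Q ⟶ P), Mono f → ¬ IsZero Q → PrecEquiv C Q P

/-- The type of spectral objects of `C`. -/
def SpectralObj := {P : C // IsSpectral C P}

/-- The spectrum `𝔖pec(C)` : equivalence classes `⟨P⟩` of spectral objects. -/
def SpecPoint := Quot (fun P Q : SpectralObj C => PrecEquiv C P.1 Q.1)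

/-- The point `⟨P⟩` of the spectrum attached to a spectral object `P`. -/
def pt (P : SpectralObj C) : SpecPoint C := Quot.mk _ P

/-- `Supp(M) = {⟨P⟩ : P spectral, P ≺ M}`. -/
def supp (M : C) : Set (SpecPoint C) :=
  {x | ∃ P : SpectralObj C, pt C P = x ∧ Prec C P.1 M}

/-- `Ass(M) = {⟨P⟩ : some spectral object of class ⟨P⟩ is a subobject of M}`. -/
def ass (M : C) : Set (SpecPoint C) :=
  {x | ∃ P : SpectralObj C, pt C P = x ∧ ∃ f : P.1 ⟶ M, Mono f}

/-- A subset of the spectrum is specialization closed if together with any point `⟨P⟩`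
it contains all of `Supp(P)`. -/
def SpecializationClosed (S : Set (SpecPoint C)) : Prop :=
  ∀ P : SpectralObj C, pt C P ∈ S → supp C P.1 ⊆ S

/-- Every nonzero object of `C` has an associated point. -/
def HasAssociatedPoints : Prop :=
  ∀ M : C, ¬ IsZero M → (ass C M).Nonempty

/-- A Grothendieck category is locally noetherian if it admits a small generating family
of noetherian objects. -/
def LocallyNoetherian : Prop :=
  ∃ (ι : Type v) (G : ι → C), ObjectProperty.IsSeparating (fun X => X ∈ Set.range G) ∧ ∀ i, IsNoetherianObject (G i)

/-- `0 ⟶ X ⟶ M ⟶ Y ⟶ 0` is a short exact sequence. -/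
def IsShortExact {X M Y : C} (f : X ⟶ M) (g : M ⟶ Y) : Prop :=
  ∃ w : f ≫ g = 0, (ShortComplex.mk f g w).ShortExact

/-- `f : N ⟶ M` exhibits `N` as an essential subobject of `M`. -/
def IsEssential {N M : C} (f : N ⟶ M) : Prop :=
  Mono f ∧ ∀ (K : C) (g : K ⟶ M), Mono g → ¬ IsZero K → ¬ IsZero (pullback f g)

/-- `i : P ⟶ E` exhibits `E` as an injective hull of `P`. -/
def IsInjectiveHull {P E : C} (i : P ⟶ E) : Prop :=
  Injective E ∧ IsEssential C i

/-- A torsion pair `(T, F)` on an abelian category: both classes are replete, all maps from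
`T` to `F` vanish, and every object is an extension of an object of `F` by an object of `T`. -/
structure IsTorsionPair (T F : Set C) : Prop where
  repleteT : ∀ X Y : C, X ∈ T → Nonempty (X ≅ Y) → Y ∈ T
  repleteF : ∀ X Y : C, X ∈ F → Nonempty (X ≅ Y) → Y ∈ F
  hom_zero : ∀ X ∈ T, ∀ Y ∈ F, ∀ f : X ⟶ Y, f = 0
  exists_ses : ∀ M : C, ∃ (X Y : C) (f : X ⟶ M) (g : M ⟶ Y),
    IsShortExact C f g ∧ X ∈ T ∧ Y ∈ F

end RosenbergSpec


/-!
A nonzero object `P` receives a nonzero map from some noetherian generator, whose image `Q` is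
then a nonzero noetherian subobject of `P`. Spectrality gives `P ≺ Q`, so `P` is a quotient of a
subobject of `Qⁿ`; and noetherian objects form a Serre class, hence are closed under finite direct
sums, subobjects and quotients.
-/

namespace CategoryTheory

variable {C : Type*} [Category C]

lemma ObjectProperty.IsSeparating.exists_ne_zero_hom [Preadditive C] {𝒢 : ObjectProperty C}
    (h𝒢 : 𝒢.IsSeparating) {X : C} (hX : ¬ IsZero X) : ∃ G, 𝒢 G ∧ ∃ h : G ⟶ X, h ≠ 0 := by
  by_contra! h
  exact hX <| (IsZero.iff_id_eq_zero X).2 <|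
    (Preadditive.isSeparating_iff 𝒢).1 h𝒢 (𝟙 X) fun G hG g => by rw [Category.comp_id, h G hG g]

lemma Subobject.factors_of_epi_comp [StrongEpiCategory C] {A B Y : C} {P : Subobject Y}
    (π : A ⟶ B) [Epi π] {h : B ⟶ Y} (hπ : P.Factors (π ≫ h)) : P.Factors h :=
  have := strongEpi_of_epi π
  have sq : CommSq (P.factorThru _ hπ) π P.arrow h := ⟨by simp⟩
  (Subobject.factors_iff _ _).2 ⟨sq.lift, sq.fac_right⟩

variable [Abelian C]

lemma Subobject.pullback_le_pullback_iff_of_epi {X Y : C} (p : X ⟶ Y) [Epi p]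
    {S T : Subobject Y} : (Subobject.pullback p).obj S ≤ (Subobject.pullback p).obj T ↔ S ≤ T := by
  refine ⟨fun h => Subobject.le_of_factors ?_, fun h => (Subobject.pullback p).monotone h⟩
  obtain ⟨A, π, _, x, hx⟩ := surjective_up_to_refinements_of_epi p S.arrow
  have hS : ((Subobject.pullback p).obj S).Factors x := by
    rw [pullback_factors_iff, ← hx]
    exact Subobject.factors_comp_arrow _
  have hT := Subobject.factors_of_le x h hS
  rw [pullback_factors_iff, ← hx] at hT
  exact Subobject.factors_of_epi_comp π hT

/- Element chase up to refinements: given `b ∈ B`, pick `a ∈ A` with `g a = g b`; then `b - a`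
comes from `X₁` and lies in `B`, hence in `A`, so `b ∈ A`. -/
lemma ShortComplex.Exact.le_of_pullback_le_of_imageSubobject_le {S : ShortComplex C}
    (hS : S.Exact) {A B : Subobject S.X₂} (hAB : A ≤ B)
    (h₁ : (Subobject.pullback S.f).obj B ≤ (Subobject.pullback S.f).obj A)
    (h₃ : imageSubobject (B.arrow ≫ S.g) ≤ imageSubobject (A.arrow ≫ S.g)) : B ≤ A := by
  have hfac : (imageSubobject (A.arrow ≫ S.g)).Factors (B.arrow ≫ S.g) :=
    Subobject.factors_of_le _ h₃ ((Subobject.factors_iff _ _).2 ⟨_, imageSubobject_arrow_comp _⟩)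
  obtain ⟨T, π, _, a, ha⟩ := surjective_up_to_refinements_of_epi
    (factorThruImageSubobject (A.arrow ≫ S.g)) ((imageSubobject _).factorThru _ hfac)
  obtain ⟨T', π', _, x₁, hx₁⟩ := hS.exact_up_to_refinements (π ≫ B.arrow - a ≫ A.arrow) (by
    rw [Preadditive.sub_comp, Category.assoc, Category.assoc,
      ← Subobject.factorThru_arrow _ _ hfac, reassoc_of% ha, imageSubobject_arrow_comp, sub_self])
  have hB : B.Factors (x₁ ≫ S.f) := by
    have := Subobject.factors_comp_arrow (π' ≫ π - π' ≫ a ≫ Subobject.ofLE A B hAB)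
    rwa [Preadditive.sub_comp, Category.assoc, Category.assoc, Category.assoc,
      Subobject.ofLE_arrow, ← Preadditive.comp_sub, hx₁] at this
  have hA : A.Factors (x₁ ≫ S.f) := by
    rw [← pullback_factors_iff] at hB ⊢
    exact Subobject.factors_of_le _ h₁ hB
  refine Subobject.le_of_factors (Subobject.factors_of_epi_comp (π' ≫ π) ?_)
  have : (π' ≫ π) ≫ B.arrow = x₁ ≫ S.f + π' ≫ a ≫ A.arrow := by
    rw [← hx₁]; simp
  rw [this]
  exact Subobject.factors_add _ _ hA (by simpa using Subobject.factors_comp_arrow (π' ≫ a))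

instance : (isNoetherianObject (C := C)).IsSerreClass where
  prop_of_epi p _ hX :=
    have : WellFoundedGT (Subobject _) := hX
    (OrderEmbedding.ofMapLEIff _
      fun _ _ => Subobject.pullback_le_pullback_iff_of_epi p).strictMono.wellFoundedGT
  prop_X₂_of_shortExact {S} hS h₁ h₃ := by
    have : WellFoundedGT (Subobject S.X₁) := h₁
    have : WellFoundedGT (Subobject S.X₃) := h₃
    refine StrictMono.wellFoundedGT (f := fun A : Subobject S.X₂ =>
      ((Subobject.pullback S.f).obj A, imageSubobject (A.arrow ≫ S.g))) fun A B hAB => ?_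
    have hle : imageSubobject (A.arrow ≫ S.g) ≤ imageSubobject (B.arrow ≫ S.g) := by
      simpa only [← Subobject.ofLE_arrow hAB.le, Category.assoc] using
        imageSubobject_comp_le (Subobject.ofLE A B hAB.le) (B.arrow ≫ S.g)
    refine lt_of_le_of_ne (Prod.mk_le_mk.2 ⟨(Subobject.pullback S.f).monotone hAB.le, hle⟩)
      fun h => hAB.not_ge ?_
    obtain ⟨h₁, h₃⟩ := Prod.mk.inj h
    exact hS.exact.le_of_pullback_le_of_imageSubobject_le hAB.le h₁.ge h₃.ge

lemma ObjectProperty.prop_biproduct_fin (P : ObjectProperty C) [P.ContainsZero]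
    [P.IsClosedUnderIsomorphisms] [P.IsClosedUnderExtensions] :
    ∀ {n : ℕ} (f : Fin n → C), (∀ i, P (f i)) → P (⨁ f)
  | 0, _, _ =>
    P.prop_of_isZero <| (IsZero.iff_id_eq_zero _).2 <| biproduct.hom_ext _ _ fun i => i.elim0
  | _ + 1, f, hf =>
    P.prop_of_iso (IsLimit.conePointUniqueUpToIso (extendFanIsLimit f (biproduct.isLimit _)
        (BinaryBiproduct.isLimit _ _)) (biproduct.isLimit f))
      (P.prop_biprod (hf 0) (P.prop_biproduct_fin _ fun i => hf i.succ))

end CategoryTheory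

namespace RosenbergSpec

variable {C : Type u} [Category.{v} C] [Abelian C]

lemma prop_of_prec (P : ObjectProperty C) [P.IsSerreClass] {X Y : C} (hXY : Prec C X Y)
    (hY : P Y) : P X := by
  obtain ⟨_, -, S, ι, π, _, _⟩ := hXY
  exact P.prop_of_epi π (P.prop_of_mono ι (P.prop_biproduct_fin _ fun _ => hY))

theorem spectral_implies_noetherian_general
    (A : Type u) [Category.{v} A] [Abelian A]
    (hln : LocallyNoetherian A)
    (P : A) (hP : IsSpectral A P) :
    IsNoetherianObject P := by
  obtain ⟨_, G, hG, hG_noetherian⟩ := hln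
  obtain ⟨_, ⟨i, rfl⟩, h, hh⟩ := hG.exists_ne_zero_hom hP.1
  have hQ : ¬ IsZero (image h) := fun hz =>
    hh (by rw [← image.fac h, hz.eq_of_src (image.ι h) 0, comp_zero])
  have hPQ : Prec A P (image h) := (hP.2 _ (image.ι h) inferInstance hQ).2
  exact ⟨prop_of_prec _ hPQ <|
    isNoetherianObject.prop_of_epi (factorThruImage h) (hG_noetherian i).prop⟩

/-- Let `A` be a locally noetherian Grothendieck category.  Then every
spectral object `P` of `A` is finitely generated (equivalently, noetherian). -/
theorem spectral_implies_noetherian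
    (A : Type u) [Category.{v} A] [Abelian A] [HasColimits A] [AB5 A]
    (hln : LocallyNoetherian A)
    (P : A) (hP : IsSpectral A P) :
    IsNoetherianObject P :=
  spectral_implies_noetherian_general A hln P hP

end RosenbergSpec
end

section
/- Let A be a locally noetherian Grothendieck category in which every nonzero object has an associated point. Let C be a full subcategory of A_fg that contains 0 and is closed under extensions. If M is a finitely generated object of A such that P belongs to C for every spectral object P with ⟨P⟩ ∈ Supp(M), then M belongs to C. -/
/-!
Common set-up: Rosenberg's spectrum of an abelian category.

For objects `X Y` of an abelian category `C`, `X ≺ Y` means that `X` is a subquotient of a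
finite direct sum of copies of `Y`; `X ≈ Y` means `X ≺ Y ≺ X`.  A nonzero object `P` is
*spectral* if it is `≈`-equivalent to each of its nonzero subobjects, and the spectrum
`𝔖pec(C)` is the collection of `≈`-equivalence classes `⟨P⟩` of spectral objects.
`Supp(M) = {⟨P⟩ : P ≺ M}` and `Ass(M) = {⟨P⟩ : some spectral object of class ⟨P⟩ embeds in M}`.
-/

open CategoryTheory CategoryTheory.Limits

attribute [local instance] CategoryTheory.Abelian.hasFiniteBiproducts
attribute [local instance] CategoryTheory.Limits.hasBinaryBiproducts_of_finite_biproducts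

universe v u

/-!
Since `M` is noetherian, some subobject `N ⊆ M` lying in `𝒞` is maximal among such. If `N ≠ M`,
the nonzero quotient `M / N` has an associated point, i.e. a spectral subobject `P ⊆ M / N`.
Its preimage `N' ⊆ M` is an extension of `P` by `N`, and `P ≺ M` puts `P` in `𝒞`; so `N'` lies
in `𝒞` and strictly contains `N`, a contradiction.
-/

namespace CategoryTheory

variable {C : Type u} [Category.{v} C] [Abelian C]

namespace ObjectProperty

variable (P : ObjectProperty C)

lemma isClosedUnderIsomorphisms_of_isClosedUnderExtensions [P.ContainsZero]
    [P.IsClosedUnderExtensions] : P.IsClosedUnderIsomorphisms where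
  of_iso {X Y} e hX := by
    obtain ⟨Z, hZ, hPZ⟩ := P.exists_prop_of_containsZero
    exact P.prop_X₂_of_shortExact (S := ShortComplex.mk e.hom (0 : Y ⟶ Z) comp_zero)
      { exact := (ShortComplex.exact_iff_epi _ rfl).2 inferInstance, epi_g := hZ.epi 0 } hX hPZ

lemma prop_of_epi_of_prop_kernel [P.IsClosedUnderExtensions] {E Q : C} (g : E ⟶ Q) [Epi g]
    (hK : P (kernel g)) (hQ : P Q) : P E :=
  P.prop_X₂_of_shortExact (S := ShortComplex.mk (kernel.ι g) g (kernel.condition g))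
    { exact := ShortComplex.exact_of_f_is_kernel _ (kernelIsKernel g) } hK hQ

lemma prop_pullback [P.IsClosedUnderExtensions] [P.IsClosedUnderIsomorphisms] {M Q X : C}
    (f : X ⟶ Q) (π : M ⟶ Q) [Epi π] (hK : P (kernel π)) (hX : P X) : P (pullback f π) := by
  have sq := IsPullback.of_hasPullback f π
  have := isIso_kernel_map_of_isPullback sq
  exact P.prop_of_epi_of_prop_kernel (pullback.fst f π)
    (P.prop_of_iso (asIso (kernel.map _ _ _ _ sq.w)).symm hK) hX

end ObjectProperty

lemma Subobject.lt_mk_pullback_snd_cokernel_π {M X : C} (N : Subobject M)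
    (f : X ⟶ cokernel N.arrow) [Mono f] (hf : f ≠ 0) :
    N < Subobject.mk (pullback.snd f (cokernel.π N.arrow)) := by
  refine lt_of_le_of_ne (Subobject.le_mk_of_comm
    (pullback.lift (f := f) (g := cokernel.π N.arrow) 0 N.arrow (by simp))
    (pullback.lift_snd _ _ _)) fun h => hf ?_
  have hsnd : pullback.snd f (cokernel.π N.arrow) ≫ cokernel.π N.arrow = 0 := by
    rw [← Subobject.ofMkLE_arrow h.ge, Category.assoc, cokernel.condition, comp_zero]
  rw [← cancel_epi (pullback.fst f (cokernel.π N.arrow)), pullback.condition, hsnd, comp_zero]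

end CategoryTheory

namespace RosenbergSpec

section

variable {C : Type u} [Category.{v} C] [Abelian C]

lemma prec_of_mono_of_epi {S X Y : C} (ι : S ⟶ Y) [Mono ι] (π : S ⟶ X) [Epi π] :
    Prec C X Y :=
  ⟨1, one_pos, S, ι ≫ biproduct.ι (fun _ : Fin 1 => Y) 0, π, inferInstance, inferInstance⟩

variable (P : ObjectProperty C)

lemma exists_gt_prop_of_ne_top [P.IsClosedUnderExtensions] [P.IsClosedUnderIsomorphisms]
    (hass : HasAssociatedPoints C) {M : C} (hsupp : ∀ Q : SpectralObj C, Prec C Q.1 M → P Q.1)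
    (N : Subobject M) (htop : N ≠ ⊤) (hN : P (N : C)) : ∃ N' > N, P (N' : C) := by
  have hcoker : ¬ IsZero (cokernel N.arrow) := fun h => by
    have := (Preadditive.epi_iff_isZero_cokernel N.arrow).2 h
    have := isIso_of_mono_of_epi N.arrow
    exact htop N.eq_top_of_isIso_arrow
  obtain ⟨-, Q, -, f, hf⟩ := hass _ hcoker
  let π := cokernel.π N.arrow
  have hQ : P Q.1 := hsupp Q (prec_of_mono_of_epi (pullback.snd f π) (pullback.fst f π))
  have hK : P (kernel π) := P.prop_of_iso (IsLimit.conePointUniqueUpToIso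
    (Abelian.monoIsKernelOfCokernel (CokernelCofork.ofπ _ (cokernel.condition N.arrow))
      (cokernelIsCokernel N.arrow)) (limit.isLimit _)) hN
  exact ⟨_, N.lt_mk_pullback_snd_cokernel_π f fun h => Q.2.1 (IsZero.of_mono_eq_zero f h),
    P.prop_of_iso (Subobject.underlyingIso _).symm (P.prop_pullback f π hK hQ)⟩

theorem prop_of_forall_spectral_prec [P.ContainsZero] [P.IsClosedUnderExtensions]
    (hass : HasAssociatedPoints C) (M : C) [IsNoetherianObject M]
    (hsupp : ∀ Q : SpectralObj C, Prec C Q.1 M → P Q.1) : P M := by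
  have := P.isClosedUnderIsomorphisms_of_isClosedUnderExtensions
  have htop : P ((⊤ : Subobject M) : C) :=
    WellFoundedGT.induction_top (P := fun N : Subobject M => P (N : C))
      ⟨⊥, P.prop_of_isZero ((isZero_zero C).of_iso Subobject.botCoeIsoZero)⟩
      (exists_gt_prop_of_ne_top P hass hsupp)
  exact P.prop_of_iso (asIso (⊤ : Subobject M).arrow) htop

end

theorem mem_of_spectral_support_subset_general
    (A : Type u) [Category.{v} A] [Abelian A]
    (hass : HasAssociatedPoints A)
    (𝒞 : Set A)
    (hzero : ∀ Z : A, IsZero Z → Z ∈ 𝒞)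
    (hext : ∀ (X M Y : A) (f : X ⟶ M) (g : M ⟶ Y),
      IsShortExact A f g → X ∈ 𝒞 → Y ∈ 𝒞 → M ∈ 𝒞)
    (M : A) (hM : IsNoetherianObject M)
    (hsupp : ∀ (P : A) (hP : IsSpectral A P), pt A ⟨P, hP⟩ ∈ supp A M → P ∈ 𝒞) :
    M ∈ 𝒞 := by
  let P : ObjectProperty A := (· ∈ 𝒞)
  have : P.ContainsZero := ⟨⟨_, isZero_zero A, hzero _ (isZero_zero A)⟩⟩
  have : P.IsClosedUnderExtensions := ⟨fun hS h₁ h₃ => hext _ _ _ _ _ ⟨_, hS⟩ h₁ h₃⟩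
  exact prop_of_forall_spectral_prec P hass M fun Q hQ => hsupp Q.1 Q.2 ⟨Q, rfl, hQ⟩

/-- Let `A` be a locally noetherian Grothendieck category in which every
nonzero object has an associated point.  Let `𝒞` be a full subcategory of `A_fg` that
contains `0` and is closed under extensions.  If `M` is a finitely generated object of `A`
such that `P ∈ 𝒞` for every spectral object `P` with `⟨P⟩ ∈ Supp(M)`, then `M ∈ 𝒞`. -/
theorem mem_of_spectral_support_subset
    (A : Type u) [Category.{v} A] [Abelian A] [HasColimits A] [AB5 A]
    (hln : LocallyNoetherian A) (hass : HasAssociatedPoints A)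
    (𝒞 : Set A)
    (hfg : ∀ X ∈ 𝒞, IsNoetherianObject X)
    (hzero : ∀ Z : A, IsZero Z → Z ∈ 𝒞)
    (hext : ∀ (X M Y : A) (f : X ⟶ M) (g : M ⟶ Y),
      IsShortExact A f g → X ∈ 𝒞 → Y ∈ 𝒞 → M ∈ 𝒞)
    (M : A) (hM : IsNoetherianObject M)
    (hsupp : ∀ (P : A) (hP : IsSpectral A P), pt A ⟨P, hP⟩ ∈ supp A M → P ∈ 𝒞) :
    M ∈ 𝒞 :=
  mem_of_spectral_support_subset_general A hass 𝒞 hzero hext M hM hsupp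

end RosenbergSpec
end

section
/- Let R be a commutative noetherian ring and let N be a spectral object in the category of R-modules. If M is a finitely generated R-module such that N ≺ M (i.e., ⟨N⟩ ∈ Supp(M)), then there exists a nonzero R-linear map from M to N. -/
/-!
Common set-up: Rosenberg's spectrum of an abelian category.

For objects `X Y` of an abelian category `C`, `X ≺ Y` means that `X` is a subquotient of a
finite direct sum of copies of `Y`; `X ≈ Y` means `X ≺ Y ≺ X`.  A nonzero object `P` is
*spectral* if it is `≈`-equivalent to each of its nonzero subobjects, and the spectrum
`𝔖pec(C)` is the collection of `≈`-equivalence classes `⟨P⟩` of spectral objects.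
`Supp(M) = {⟨P⟩ : P ≺ M}` and `Ass(M) = {⟨P⟩ : some spectral object of class ⟨P⟩ embeds in M}`.
-/

open CategoryTheory CategoryTheory.Limits

attribute [local instance] CategoryTheory.Abelian.hasFiniteBiproducts
attribute [local instance] CategoryTheory.Limits.hasBinaryBiproducts_of_finite_biproducts

universe v u

/-!
Let `q` be an associated prime of `N`, so that `R ⧸ q` embeds in `N`. Since `N ≺ M`, every
element killing `M` kills `N`, so `Ann M ⊆ Ann N ⊆ q` and `q` lies in the support of the finitely
generated module `M`. By Nakayama `κ(q) ⊗ M ≠ 0`, and a nonzero functional on this `κ(q)`-vector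
space gives a nonzero `R`-linear map `M → κ(q) = Frac(R ⧸ q)`. Its image is finitely generated, so
a common denominator turns it into a nonzero map `M → R ⧸ q`, which we compose with `R ⧸ q ↪ N`.
-/

open TensorProduct

theorem Module.exists_linearMap_ne_zero_of_nontrivial_tensorProduct
    {R K M : Type*} [CommSemiring R] [Field K] [Algebra R K] [AddCommMonoid M] [Module R M]
    [Nontrivial (K ⊗[R] M)] : ∃ f : M →ₗ[R] K, f ≠ 0 := by
  obtain ⟨x, hx⟩ := exists_ne (0 : K ⊗[R] M)
  obtain ⟨ℓ, hℓ⟩ : ∃ ℓ : Module.Dual K (K ⊗[R] M), ℓ x ≠ 0 := by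
    by_contra! h
    exact hx ((Module.forall_dual_apply_eq_zero_iff K x).mp h)
  refine ⟨(ℓ.restrictScalars R).comp (TensorProduct.mk R K M 1), fun h0 => hℓ ?_⟩
  have hℓ0 : ℓ = 0 := TensorProduct.AlgebraTensorModule.ext fun a m => by
    have := LinearMap.congr_fun h0 m
    simp only [LinearMap.comp_apply, TensorProduct.mk_apply, LinearMap.restrictScalars_apply,
      LinearMap.zero_apply] at this
    rw [← mul_one a, ← smul_eq_mul, ← TensorProduct.smul_tmul', map_smul, this, smul_zero,
      LinearMap.zero_apply]
  rw [hℓ0, LinearMap.zero_apply]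

theorem IsFractionRing.exists_linearMap_ne_zero
    {R A K M : Type*} [CommSemiring R] [CommRing A] [Algebra R A] [CommRing K] [Algebra A K]
    [IsFractionRing A K] [Algebra R K] [IsScalarTower R A K]
    [AddCommMonoid M] [Module R M] [Module.Finite R M]
    {f : M →ₗ[R] K} (hf : f ≠ 0) : ∃ g : M →ₗ[R] A, g ≠ 0 := by
  have hfg : (Submodule.span A (Set.range f)).FG := by
    have : (LinearMap.range f).FG := LinearMap.range_eq_map f ▸ Module.Finite.fg_top.map f
    simpa only [LinearMap.coe_range] using this.span (A := A)
  obtain ⟨a, ha, hint⟩ := FractionalIdeal.isFractional_of_fg (S := nonZeroDivisors A) hfg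
  let ι : A →ₗ[R] K := (Algebra.linearMap A K).restrictScalars R
  have hι : Function.Injective ι := IsFractionRing.injective A K
  have hrange : ∀ m, (a • f) m ∈ LinearMap.range ι := fun m =>
    hint _ (Submodule.subset_span ⟨m, rfl⟩)
  set g := (LinearEquiv.ofInjective ι hι).symm.toLinearMap ∘ₗ (a • f).codRestrict _ hrange
  have hιg : ∀ m, ι (g m) = algebraMap A K a * f m := fun m => by
    simp only [g, LinearMap.comp_apply, LinearEquiv.coe_coe, LinearEquiv.ofInjective_symm_apply,
      LinearMap.codRestrict_apply, LinearMap.smul_apply, Algebra.smul_def]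
  obtain ⟨m, hm : f m ≠ 0⟩ := DFunLike.ne_iff.mp hf
  refine ⟨g, fun h0 => hm ?_⟩
  have hunit : IsUnit (algebraMap A K a) := IsLocalization.map_units K ⟨a, ha⟩
  rw [← hunit.mul_right_eq_zero, ← hιg, h0, LinearMap.zero_apply, map_zero]

theorem Module.exists_linearMap_quotient_ne_zero_of_annihilator_le
    {R M : Type*} [CommRing R] [AddCommGroup M] [Module R M] [Module.Finite R M]
    (q : Ideal R) [q.IsPrime] (hq : Module.annihilator R M ≤ q) :
    ∃ f : M →ₗ[R] R ⧸ q, f ≠ 0 := by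
  have : Nontrivial (q.ResidueField ⊗[R] M) :=
    (Module.mem_support_iff_nontrivial_residueField_tensorProduct ⟨q, ‹_›⟩).mp
      (Module.mem_support_iff_of_finite.mpr hq)
  obtain ⟨f, hf⟩ := Module.exists_linearMap_ne_zero_of_nontrivial_tensorProduct
    (R := R) (K := q.ResidueField) (M := M)
  exact IsFractionRing.exists_linearMap_ne_zero (A := R ⧸ q) hf

namespace RosenbergSpec

theorem annihilator_le_of_prec {R : Type u} [CommRing R] {X Y : ModuleCat.{u} R}
    (h : Prec (ModuleCat.{u} R) X Y) : Module.annihilator R Y ≤ Module.annihilator R X := by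
  obtain ⟨n, -, S, ι, π, hι, hπ⟩ := h
  calc Module.annihilator R Y
      ≤ Module.annihilator R (Fin n → Y) := by
        rw [Module.annihilator_pi]; exact le_iInf fun _ => le_rfl
    _ = Module.annihilator R (⨁ fun _ : Fin n => Y : ModuleCat R) :=
        (ModuleCat.biproductIsoPi _).toLinearEquiv.annihilator_eq.symm
    _ ≤ Module.annihilator R S :=
        ι.hom.annihilator_le_of_injective ((ModuleCat.mono_iff_injective ι).mp hι)
    _ ≤ Module.annihilator R X :=
        π.hom.annihilator_le_of_surjective ((ModuleCat.epi_iff_surjective π).mp hπ)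

/-- Let `R` be a commutative noetherian ring and let `N` be a spectral
object in the category of `R`-modules.  If `M` is a finitely generated `R`-module with
`N ≺ M` (i.e. `⟨N⟩ ∈ Supp(M)`), then there is a nonzero `R`-linear map `M ⟶ N`. -/
theorem exists_nonzero_hom_of_spectral_prec
    (R : Type u) [CommRing R] [IsNoetherianRing R]
    (N M : ModuleCat.{u} R)
    (hN : IsSpectral (ModuleCat.{u} R) N)
    (hM : Module.Finite R M)
    (h : Prec (ModuleCat.{u} R) N M) :
    ∃ f : M ⟶ N, f ≠ 0 := by
  have : Nontrivial N := not_subsingleton_iff_nontrivial.mp fun hs =>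
    hN.1 (ModuleCat.isZero_of_subsingleton N)
  obtain ⟨q, hq⟩ := associatedPrimes.nonempty R N
  obtain ⟨hqp, j, hj⟩ := (isAssociatedPrime_iff_exists_injective_linearMap q N).mp hq
  have hann : Module.annihilator R M ≤ q := (annihilator_le_of_prec h).trans <| by
    simpa only [Submodule.annihilator_top] using hq.annihilator_le
  obtain ⟨f, hf⟩ := Module.exists_linearMap_quotient_ne_zero_of_annihilator_le q hann
  refine ⟨ModuleCat.ofHom (j ∘ₗ f), fun h0 => hf ?_⟩
  ext m
  exact hj (by simpa using congr($h0 m))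

end RosenbergSpec
end

section
/- Let R be a commutative noetherian ring and let M be a finitely generated R-module. Then for every nonzero submodule N of M there exists a nonzero R-linear map from M to N. -/
/-!
Let `p = ann x` be an associated prime of `N`; it lies in the support of `M`. After localizing
at `p`, the nonzero finite module `M_p` surjects onto the residue field, which embeds into `N_p`
via `x`, so there is a nonzero map `M_p → N_p`. As `M` is finitely presented, some multiple
`s • φ` of it (with `s ∉ p`) lifts to a map `M → N`, and the lift is nonzero because `s` acts
invertibly on `N_p`.
-/

open IsLocalRing Module

theorem IsLocalRing.exists_surjective_quotient_maximalIdeal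
    {A M : Type*} [CommRing A] [IsLocalRing A]
    [AddCommGroup M] [Module A M] [Module.Finite A M] [Nontrivial M] :
    ∃ π : M →ₗ[A] A ⧸ maximalIdeal A, Function.Surjective π := by
  obtain ⟨W, hW, -⟩ :=
    (eq_top_or_exists_le_coatom (⊥ : Submodule A M)).resolve_left bot_ne_top
  have : IsSimpleModule A (M ⧸ W) := (isSimpleModule_iff_isCoatom).mpr hW
  obtain ⟨I, hI, ⟨e⟩⟩ := isSimpleModule_iff_quot_maximal.mp this
  obtain rfl := eq_maximalIdeal hI
  exact ⟨e.toLinearMap ∘ₗ W.mkQ, e.surjective.comp W.mkQ_surjective⟩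

theorem IsLocalRing.exists_linearMap_ne_zero_of_maximalIdeal_mem_associatedPrimes
    {A M N : Type*} [CommRing A] [IsLocalRing A] [IsNoetherianRing A]
    [AddCommGroup M] [Module A M] [Module.Finite A M] [Nontrivial M]
    [AddCommGroup N] [Module A N] (h : maximalIdeal A ∈ associatedPrimes A N) :
    ∃ f : M →ₗ[A] N, f ≠ 0 := by
  obtain ⟨π, hπ⟩ := exists_surjective_quotient_maximalIdeal (A := A) (M := M)
  obtain ⟨-, ι, hι⟩ := (isAssociatedPrime_iff_exists_injective_linearMap _ _).mp h
  refine ⟨ι ∘ₗ π, fun h0 => ?_⟩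
  obtain ⟨m, hm⟩ := hπ 1
  have := LinearMap.congr_fun h0 m
  simp only [LinearMap.comp_apply, hm, LinearMap.zero_apply] at this
  exact one_ne_zero (hι (this.trans (map_zero ι).symm))

theorem Module.FinitePresentation.exists_linearMap_ne_zero_of_isLocalizedModule
    {R M N N' : Type*} [CommRing R] (S : Submonoid R)
    [AddCommGroup M] [Module R M] [Module.FinitePresentation R M]
    [AddCommGroup N] [Module R N] [AddCommGroup N'] [Module R N']
    (f : N →ₗ[R] N') [IsLocalizedModule S f] {g : M →ₗ[R] N'} (hg : g ≠ 0) :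
    ∃ h : M →ₗ[R] N, h ≠ 0 := by
  obtain ⟨h, s, hs⟩ := exists_lift_of_isLocalizedModule S f g
  refine ⟨h, fun h0 => hg ?_⟩
  ext m
  apply IsLocalizedModule.smul_injective f s
  simpa [h0] using (LinearMap.congr_fun hs m).symm

theorem IsAssociatedPrime.mem_support {R M : Type*} [CommRing R] [AddCommGroup M]
    [Module R M] {I : Ideal R} (h : IsAssociatedPrime I M) :
    ⟨I, h.isPrime⟩ ∈ Module.support R M := by
  obtain ⟨-, x, rfl⟩ := h
  exact Module.mem_support_iff_exists_annihilator.mpr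
    ⟨x, (Submodule.bot_colon' (S := {x})).symm.le.trans Ideal.le_radical⟩

theorem exists_linearMap_ne_zero_of_mem_associatedPrimes_of_mem_support
    {R M N : Type*} [CommRing R] [IsNoetherianRing R]
    [AddCommGroup M] [Module R M] [Module.Finite R M] [AddCommGroup N] [Module R N]
    (p : PrimeSpectrum R) (hN : p.asIdeal ∈ associatedPrimes R N)
    (hM : p ∈ Module.support R M) :
    ∃ f : M →ₗ[R] N, f ≠ 0 := by
  have : Nontrivial (LocalizedModule.AtPrime p.asIdeal M) := Module.mem_support_iff.mp hM
  obtain ⟨g, hg⟩ := IsLocalRing.exists_linearMap_ne_zero_of_maximalIdeal_mem_associatedPrimes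
    (M := LocalizedModule.AtPrime p.asIdeal M)
    (associatedPrimes.mem_associatedPrimes_atPrime_of_mem_associatedPrimes hN)
  have : Module.FinitePresentation R M := Module.finitePresentation_of_finite R M
  refine FinitePresentation.exists_linearMap_ne_zero_of_isLocalizedModule p.asIdeal.primeCompl
    (LocalizedModule.mkLinearMap p.asIdeal.primeCompl N)
    (g := g.restrictScalars R ∘ₗ LocalizedModule.mkLinearMap p.asIdeal.primeCompl M) ?_
  intro h0
  refine hg (LinearMap.restrictScalars_injective R ?_)
  exact IsLocalizedModule.linearMap_ext p.asIdeal.primeCompl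
    (LocalizedModule.mkLinearMap _ M) (LocalizedModule.mkLinearMap _ N) h0

/-- Let `R` be a commutative noetherian ring and `M` a finitely generated
`R`-module.  Then for every nonzero submodule `N` of `M` there exists a nonzero `R`-linear
map from `M` to `N`. -/
theorem exists_nonzero_hom_to_nonzero_submodule
    (R : Type*) [CommRing R] [IsNoetherianRing R]
    (M : Type*) [AddCommGroup M] [Module R M] [Module.Finite R M]
    (N : Submodule R M) (hN : N ≠ ⊥) :
    ∃ f : M →ₗ[R] N, f ≠ 0 := by
  have : Nontrivial N := Submodule.nontrivial_iff_ne_bot.mpr hN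
  obtain ⟨p, hp⟩ := associatedPrimes.nonempty R N
  exact exists_linearMap_ne_zero_of_mem_associatedPrimes_of_mem_support ⟨p, hp.isPrime⟩ hp
    (IsAssociatedPrime.mem_support (hp.map_of_injective N.subtype N.injective_subtype))
end

section
/- Let A be a locally noetherian Grothendieck category and let T be a class of objects of A closed under subobjects. Let F = {N ∈ A : Hom_A(M,N) = 0 for all M ∈ T}. Then F is closed under arbitrary coproducts: for any family (N_i)_{i ∈ I} of objects of F, the coproduct ⊕_{i ∈ I} N_i lies in F. -/
/-!
Common set-up: Rosenberg's spectrum of an abelian category.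

For objects `X Y` of an abelian category `C`, `X ≺ Y` means that `X` is a subquotient of a
finite direct sum of copies of `Y`; `X ≈ Y` means `X ≺ Y ≺ X`.  A nonzero object `P` is
*spectral* if it is `≈`-equivalent to each of its nonzero subobjects, and the spectrum
`𝔖pec(C)` is the collection of `≈`-equivalence classes `⟨P⟩` of spectral objects.
`Supp(M) = {⟨P⟩ : P ≺ M}` and `Ass(M) = {⟨P⟩ : some spectral object of class ⟨P⟩ embeds in M}`.
-/

open CategoryTheory CategoryTheory.Limits

attribute [local instance] CategoryTheory.Abelian.hasFiniteBiproducts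
attribute [local instance] CategoryTheory.Limits.hasBinaryBiproducts_of_finite_biproducts

universe v u

/-!
In an AB5 category `∐ N` is the filtered colimit of its finite subcoproducts, and pulling back
along `f : M ⟶ ∐ N` commutes with this colimit, so `M` is the colimit of the pullbacks `M_S`.
Each `M_S` maps to a finite coproduct, which is a biproduct, by a morphism whose components are
restrictions of the maps `f ≫ Sigma.π N i : M ⟶ N i`; these vanish as `M ∈ T`. Hence `f`
vanishes on every `M_S`, and so `f = 0`.
-/

namespace CategoryTheory.Limits

open CoproductsFromFiniteFiltered

variable {C : Type u} [Category.{v} C]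

section

variable {J : Type*} [Category J] [IsConnected J]

lemma isIso_colimitDesc_const (W : C) :
    IsIso (colimit.desc _ (Cocone.mk W (𝟙 ((Functor.const J).obj W)))) :=
  (colimit.isColimit _).nonempty_isColimit_iff_isIso_desc.mp ⟨isColimitConstCocone J W⟩

lemma isIso_colimMap_ι [HasColimitsOfShape J C] {Y : J ⥤ C} {c : Cocone Y} (hc : IsColimit c) :
    IsIso (colim.map c.ι) := by
  have := isIso_colimitDesc_const (J := J) c.pt
  have : IsIso (colim.map c.ι ≫ colimit.desc _ (Cocone.mk c.pt (𝟙 _))) := by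
    rw [show colim.map c.ι ≫ colimit.desc _ (Cocone.mk c.pt (𝟙 _)) = colimit.desc Y c by
      apply colimit.hom_ext; intro j; simp]
    exact (colimit.isColimit Y).nonempty_isColimit_iff_isIso_desc.mp ⟨hc⟩
  exact IsIso.of_isIso_comp_right _ (colimit.desc _ (Cocone.mk c.pt (𝟙 _)))

lemma isIso_colimitDesc_pullbackSnd [HasColimitsOfShape J C] [HasExactColimitsOfShape J C]
    [HasPullbacks C] {Y : J ⥤ C} {c : Cocone Y} (hc : IsColimit c) {X : C} (z : X ⟶ c.pt) :
    IsIso (colimit.desc _ (Cocone.mk X (pullback.snd c.ι ((Functor.const J).map z)))) := by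
  have := isIso_colimMap_ι hc
  have := isIso_colimitDesc_const (J := J) X
  have : IsIso (colim.map (pullback.snd c.ι ((Functor.const J).map z))) :=
    ((IsPullback.of_hasPullback c.ι ((Functor.const J).map z)).map colim).isIso_snd_of_isIso
  rw [show colimit.desc _ (Cocone.mk X (pullback.snd c.ι ((Functor.const J).map z))) =
      colim.map (pullback.snd c.ι ((Functor.const J).map z)) ≫
        colimit.desc _ (Cocone.mk X (𝟙 _)) by ext; simp]
  infer_instance

end

section

variable [Preadditive C] {β : Type*} [DecidableEq β] {f : β → C} [HasBiproduct f]

lemma Sigma.eq_zero_of_forall_comp_π_eq_zero_of_hasBiproduct {X : C} (g : X ⟶ ∐ f)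
    (hg : ∀ b, g ≫ Sigma.π f b = 0) : g = 0 := by
  have hπ (b : β) : (biproduct.isoCoproduct f).inv ≫ biproduct.π f b = Sigma.π f b := by
    ext b'
    simp [biproduct.isoCoproduct_inv, biproduct.ι_π, Sigma.ι_π]
  rw [← cancel_mono (biproduct.isoCoproduct f).inv, zero_comp]
  exact biproduct.hom_ext _ _ fun b => by rw [Category.assoc, hπ, hg, zero_comp]

end

section

variable [Abelian C] {I : Type*} [DecidableEq I] (N : I → C) [HasCoproduct N]

lemma finiteSubcoproductsCocone_ι_app_π (S : Finset (Discrete I)) (x : S) :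
    (finiteSubcoproductsCocone N).ι.app S ≫ Sigma.π N x.1.as =
      Sigma.π (fun y : S => (Discrete.functor N).obj y.1) x := by
  refine Sigma.hom_ext _ _ fun y => ?_
  erw [Sigma.ι_desc_assoc]
  by_cases hyx : y = x
  · subst hyx
    rw [Sigma.ι_π_eq_id]
    exact Sigma.ι_π_eq_id N _
  · have : y.1.as ≠ x.1.as := fun h => hyx (Subtype.ext (Discrete.ext h))
    rw [Sigma.ι_π_of_ne _ hyx]
    exact Sigma.ι_π_of_ne N this

variable [HasColimitsOfShape (Finset (Discrete I)) C]
  [HasExactColimitsOfShape (Finset (Discrete I)) C]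

lemma Sigma.eq_zero_of_forall_comp_π_eq_zero {X : C} (g : X ⟶ ∐ N)
    (hg : ∀ i, g ≫ Sigma.π N i = 0) : g = 0 := by
  let c := finiteSubcoproductsCocone N
  let fst := pullback.fst c.ι ((Functor.const _).map g)
  let snd := pullback.snd c.ι ((Functor.const _).map g)
  have : IsConnected (Finset (Discrete I)) := IsFiltered.isConnected _
  have := isIso_colimitDesc_pullbackSnd (isColimitFiniteSubproductsCocone N) g
  rw [← cancel_epi (colimit.desc _ (Cocone.mk X snd)), comp_zero]
  refine colimit.hom_ext fun S => ?_
  rw [colimit.ι_desc_assoc, comp_zero]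
  have hsq : fst.app S ≫ c.ι.app S = snd.app S ≫ g := NatTrans.congr_app pullback.condition S
  have hfst : fst.app S = 0 :=
    Sigma.eq_zero_of_forall_comp_π_eq_zero_of_hasBiproduct _ fun x => by
      rw [← finiteSubcoproductsCocone_ι_app_π]
      exact (Category.assoc _ _ _).symm.trans
        ((congrArg (· ≫ Sigma.π N x.1.as) hsq).trans (by rw [Category.assoc, hg, comp_zero]))
  rw [← hsq, hfst, zero_comp]
  -- the two zeros have the codomains `c.pt` and `∐ N`, equal only up to unfolding `c`
  rfl

end

end CategoryTheory.Limits

namespace RosenbergSpec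

theorem torsionfree_closed_under_coproducts_general
    (A : Type u) [Category.{v} A] [Abelian A] [HasColimits A] [AB5 A]
    (T : Set A)
    (I : Type v) (N : I → A)
    (hN : ∀ i : I, ∀ M ∈ T, ∀ f : M ⟶ N i, f = 0) :
    ∀ M ∈ T, ∀ f : M ⟶ ∐ N, f = 0 := by
  classical
  intro M hM f
  exact Sigma.eq_zero_of_forall_comp_π_eq_zero N f fun i => hN i M hM _

/-- Let `A` be a locally noetherian Grothendieck category and let `T` be a
class of objects closed under subobjects.  Let `F = {N : Hom(M, N) = 0 for all M ∈ T}`.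
Then `F` is closed under arbitrary coproducts. -/
theorem torsionfree_closed_under_coproducts
    (A : Type u) [Category.{v} A] [Abelian A] [HasColimits A] [AB5 A]
    (hln : LocallyNoetherian A)
    (T : Set A) (hT : ∀ (X M : A) (f : X ⟶ M), Mono f → M ∈ T → X ∈ T)
    (I : Type v) (N : I → A)
    (hN : ∀ i : I, ∀ M ∈ T, ∀ f : M ⟶ N i, f = 0) :
    ∀ M ∈ T, ∀ f : M ⟶ ∐ N, f = 0 :=
  torsionfree_closed_under_coproducts_general A T I N hN

end RosenbergSpec
end

section
/- Let A be a locally noetherian Grothendieck category in which every nonzero object has an associated point, and let C be a full subcategory of A closed under subobjects, finite direct sums and essential extensions. Let M be a finitely generated object of A such that P ∈ C for every spectral object P admitting a monomorphism P ↪ M. Then M ∈ C. -/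
/-!
Common set-up: Rosenberg's spectrum of an abelian category.

For objects `X Y` of an abelian category `C`, `X ≺ Y` means that `X` is a subquotient of a
finite direct sum of copies of `Y`; `X ≈ Y` means `X ≺ Y ≺ X`.  A nonzero object `P` is
*spectral* if it is `≈`-equivalent to each of its nonzero subobjects, and the spectrum
`𝔖pec(C)` is the collection of `≈`-equivalence classes `⟨P⟩` of spectral objects.
`Supp(M) = {⟨P⟩ : P ≺ M}` and `Ass(M) = {⟨P⟩ : some spectral object of class ⟨P⟩ embeds in M}`.
-/

open CategoryTheory CategoryTheory.Limits

attribute [local instance] CategoryTheory.Abelian.hasFiniteBiproducts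
attribute [local instance] CategoryTheory.Limits.hasBinaryBiproducts_of_finite_biproducts

universe v u

/-!
Since `M` is noetherian, among its subobjects lying in `𝒞` there is a maximal one, `N`.
If `N` were not essential in `M`, some nonzero `K ↪ M` would meet `N` trivially; `K` contains a
spectral subobject `P`, which lies in `𝒞`, and then `N ⊕ P ↪ M` is a strictly larger subobject
lying in `𝒞`. So `N` is essential in `M`, and `M ∈ 𝒞` by closure under essential extensions.
-/

namespace RosenbergSpec

section Pullback

variable {C : Type*} [Category C] [HasZeroMorphisms C]

lemma isZero_of_fac_of_isZero_pullback {X K M : C} {f : X ⟶ M} {g : K ⟶ M} [HasPullback f g]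
    (h : IsZero (pullback f g)) (u : K ⟶ X) (hu : u ≫ f = g) : IsZero K := by
  rw [IsZero.iff_id_eq_zero, ← pullback.lift_snd u (𝟙 K) (by simpa using hu),
    h.eq_zero_of_tgt (pullback.lift _ _ _), zero_comp]

lemma isZero_pullback_comp_of_mono {X K P M : C} {f : X ⟶ M} {g : K ⟶ M} (p : P ⟶ K) [Mono p]
    [HasPullback f g] [HasPullback f (p ≫ g)] (h : IsZero (pullback f g)) :
    IsZero (pullback f (p ≫ g)) := by
  have w : pullback.fst f (p ≫ g) ≫ f = (pullback.snd f (p ≫ g) ≫ p) ≫ g := by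
    simp [pullback.condition]
  have hfst := pullback.lift_fst _ _ w
  have hsnd := pullback.lift_snd _ _ w
  rw [h.eq_zero_of_tgt (pullback.lift _ _ w), zero_comp] at hfst hsnd
  rw [IsZero.iff_id_eq_zero]
  ext
  · simpa using hfst.symm
  · simpa using zero_of_comp_mono p hsnd.symm

end Pullback

section Biproduct

variable {C : Type*} [Category C] [Preadditive C] [HasBinaryBiproducts C]

lemma mono_biprod_desc_of_isZero_pullback {X Y M : C} {f : X ⟶ M} {g : Y ⟶ M} [HasPullback f g]
    (h : IsZero (pullback f g)) : Mono (biprod.desc f g) := by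
  refine Preadditive.mono_of_cancel_zero _ fun {T} t ht => ?_
  have w : (t ≫ biprod.fst) ≫ f = (-(t ≫ biprod.snd)) ≫ g := by
    rw [Preadditive.neg_comp, eq_neg_iff_add_eq_zero, ← biprod.lift_desc, ← ht]
    congr 1
    ext <;> simp
  have hfst := pullback.lift_fst _ _ w
  have hsnd := pullback.lift_snd _ _ w
  rw [h.eq_zero_of_tgt (pullback.lift _ _ w), zero_comp] at hfst hsnd
  ext
  · simpa using hfst.symm
  · simpa using hsnd.symm

lemma Subobject.lt_mk_biprod_desc {K M : C} (N : Subobject M) {g : K ⟶ M} (hK : ¬ IsZero K)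
    [HasPullback N.arrow g] (h : IsZero (pullback N.arrow g)) [Mono (biprod.desc N.arrow g)] :
    N < Subobject.mk (biprod.desc N.arrow g) := by
  refine lt_of_le_of_ne (Subobject.le_mk_of_comm biprod.inl (by simp)) fun hN => hK ?_
  have hg : N.Factors g := by
    have := Subobject.factors_of_factors_right biprod.inr
      (Subobject.mk_factors_self (biprod.desc N.arrow g))
    rwa [biprod.inr_desc, ← hN] at this
  exact isZero_of_fac_of_isZero_pullback h _ (Subobject.factorThru_arrow N g hg)

end Biproduct

theorem mem_of_spectral_subobjects_mem_general
    (A : Type u) [Category.{v} A] [Abelian A]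
    (hass : HasAssociatedPoints A)
    (𝒞 : Set A)
    (hsub : ∀ (X M : A) (f : X ⟶ M), Mono f → M ∈ 𝒞 → X ∈ 𝒞)
    (hzero : ∀ Z : A, IsZero Z → Z ∈ 𝒞)
    (hsum : ∀ X Y : A, X ∈ 𝒞 → Y ∈ 𝒞 → (X ⊞ Y) ∈ 𝒞)
    (hess : ∀ (M N : A) (f : M ⟶ N), IsEssential A f → M ∈ 𝒞 → N ∈ 𝒞)
    (M : A) (hM : IsNoetherianObject M)
    (hspec : ∀ (P : A), IsSpectral A P → ∀ f : P ⟶ M, Mono f → P ∈ 𝒞) :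
    M ∈ 𝒞 := by
  obtain ⟨N, hN⟩ := exists_maximal_of_wellFoundedGT (fun N : Subobject M => (N : A) ∈ 𝒞)
    ⟨⊥, hzero _ (IsZero.of_iso (isZero_zero A) Subobject.botCoeIsoZero)⟩
  refine hess _ _ N.arrow ⟨inferInstance, fun K g hg hK hNK => ?_⟩ hN.prop
  obtain ⟨-, P, -, p, hp⟩ := hass K hK
  have hPC : P.1 ∈ 𝒞 := hspec P.1 P.2 (p ≫ g) (mono_comp p g)
  have hNP : IsZero (pullback N.arrow (p ≫ g)) := isZero_pullback_comp_of_mono p hNK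
  have := mono_biprod_desc_of_isZero_pullback hNP
  exact hN.not_gt (hsub _ _ (Subobject.underlyingIso _).hom inferInstance (hsum _ _ hN.prop hPC))
    (Subobject.lt_mk_biprod_desc N P.2.1 hNP)

/-- Let `A` be a locally noetherian Grothendieck category in which every
nonzero object has an associated point, and let `𝒞` be a full subcategory closed under
subobjects, finite direct sums and essential extensions.  Let `M` be a finitely generated
object such that `P ∈ 𝒞` for every spectral object `P` admitting a monomorphism `P ↪ M`.
Then `M ∈ 𝒞`. -/
theorem mem_of_spectral_subobjects_mem
    (A : Type u) [Category.{v} A] [Abelian A] [HasColimits A] [AB5 A]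
    (hln : LocallyNoetherian A) (hass : HasAssociatedPoints A)
    (𝒞 : Set A)
    (hsub : ∀ (X M : A) (f : X ⟶ M), Mono f → M ∈ 𝒞 → X ∈ 𝒞)
    (hzero : ∀ Z : A, IsZero Z → Z ∈ 𝒞)
    (hsum : ∀ X Y : A, X ∈ 𝒞 → Y ∈ 𝒞 → (X ⊞ Y) ∈ 𝒞)
    (hess : ∀ (M N : A) (f : M ⟶ N), IsEssential A f → M ∈ 𝒞 → N ∈ 𝒞)
    (M : A) (hM : IsNoetherianObject M)
    (hspec : ∀ (P : A), IsSpectral A P → ∀ f : P ⟶ M, Mono f → P ∈ 𝒞) :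
    M ∈ 𝒞 :=
  mem_of_spectral_subobjects_mem_general A hass 𝒞 hsub hzero hsum hess M hM hspec

end RosenbergSpec
end
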